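/- arXiv:1307.2074 — 3 statements merged into one kernel-verified Lean document; each statement's English description precedes it below -/
import Mathlib

section
/- Let (M₀,M₁) satisfy conditions (a)–(d), let 0 < c̃ < c₁ and let ρ > 0 be such that ∂_{0,ρ}M₀(m) + M₁(m) − c̃ is maximal monotone. Let B ⊆ H_{ρ,0}(ℝ;H) ⊕ H_{ρ,0}(ℝ;H) be monotone. Then for all (u,f),(v,g) ∈ ∂_{0,ρ}M₀(m) + M₁(m) + B the estimate |u − v|_{H_{ρ,0}(ℝ;H)} ≤ (1/c̃)|f − g|_{H_{ρ,0}(ℝ;H)} holds; in other words, the inverse relation (∂_{0,ρ}M₀(m) + M₁(m) + B)^{−1} is a Lipschitz-continuous mapping. -/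
noncomputable section

open MeasureTheory Filter Topology Set

local notation "⟪" x ", " y "⟫" => @inner ℂ _ _ x y

/-- The exponentially weighted Lebesgue measure `e^{-2ρt} dt` on `ℝ`. -/
def wMeasure (ρ : ℝ) : Measure ℝ :=
  volume.withDensity fun t => ENNReal.ofReal (Real.exp (-2 * ρ * t))

/-- The weighted space `H_{ρ,0}(ℝ;H)`. -/
abbrev WL2 (ρ : ℝ) (H : Type*) [NormedAddCommGroup H] : Type _ :=
  Lp H 2 (wMeasure ρ)

/-- A relation `A ⊆ K ⊕ K` is monotone. -/
def MonotoneRel {K : Type*} [NormedAddCommGroup K] [InnerProductSpace ℂ K]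
    (A : Set (K × K)) : Prop :=
  ∀ p ∈ A, ∀ q ∈ A, 0 ≤ (⟪p.1 - q.1, p.2 - q.2⟫).re

/-- A relation is maximal monotone if it is monotone and admits no proper monotone
extension. -/
def MaximalMonotoneRel {K : Type*} [NormedAddCommGroup K] [InnerProductSpace ℂ K]
    (A : Set (K × K)) : Prop :=
  MonotoneRel A ∧ ∀ B : Set (K × K), MonotoneRel B → A ⊆ B → B = A

/-- Sum of two relations. -/
def relAdd {K : Type*} [AddCommGroup K] (A B : Set (K × K)) : Set (K × K) :=
  {p | ∃ y z, (p.1, y) ∈ A ∧ (p.1, z) ∈ B ∧ p.2 = y + z}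

/-- Inverse relation. -/
def relInv {K : Type*} (A : Set (K × K)) : Set (K × K) := {p | (p.2, p.1) ∈ A}

/-- The relation `A - c`, i.e. `{(x, y - c•x) : (x,y) ∈ A}`. -/
def relSub {K : Type*} [AddCommGroup K] [Module ℝ K] (A : Set (K × K)) (c : ℝ) :
    Set (K × K) := {p | (p.1, p.2 + c • p.1) ∈ A}

/-- Graph of a mapping. -/
def graphOf {K : Type*} (f : K → K) : Set (K × K) := {p | p.2 = f p.1}

/-- Yosida approximation `A_λ = λ⁻¹ (1 - (1 + λ A)⁻¹)` of a relation, as a relation: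
`(x, v) ∈ A_λ` iff `x = j + λ • v` for some `(j, v) ∈ A`. -/
def yosidaRel {K : Type*} [AddCommGroup K] [Module ℝ K] (l : ℝ) (A : Set (K × K)) :
    Set (K × K) := {p | ∃ j, (j, p.2) ∈ A ∧ p.1 = j + l • p.2}

variable {H : Type*} [NormedAddCommGroup H] [InnerProductSpace ℂ H] [CompleteSpace H]

/-- The graph of differentiation on smooth compactly supported functions, inside
`H_{ρ,0}(ℝ;H) ⊕ H_{ρ,0}(ℝ;H)`. -/
def testGraph (ρ : ℝ) : Set (WL2 ρ H × WL2 ρ H) :=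
  {p | ∃ φ : ℝ → H, ContDiff ℝ (⊤ : ℕ∞) φ ∧ HasCompactSupport φ ∧
    ⇑p.1 =ᵐ[wMeasure ρ] φ ∧ ⇑p.2 =ᵐ[wMeasure ρ] deriv φ}

/-- The time derivative `∂_{0,ρ}`, as a relation: the closure (in
`H_{ρ,0}(ℝ;H) ⊕ H_{ρ,0}(ℝ;H)`) of the graph of differentiation on test functions. -/
def derivRel (ρ : ℝ) : Set (WL2 ρ H × WL2 ρ H) := closure (testGraph (H := H) ρ)

/-- The lift `A_ρ` of a relation `A ⊆ H ⊕ H` to `H_{ρ,0}(ℝ;H)`. -/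
def extRel (ρ : ℝ) (A : Set (H × H)) : Set (WL2 ρ H × WL2 ρ H) :=
  {p | ∀ᵐ t ∂(wMeasure ρ), (p.1 t, p.2 t) ∈ A}

/-- The graph of `∂_{0,ρ} M₀(m)` given the multiplication operator `M0m`. -/
def dGraph (ρ : ℝ) (M0m : WL2 ρ H → WL2 ρ H) : Set (WL2 ρ H × WL2 ρ H) :=
  {p | (M0m p.1, p.2) ∈ derivRel ρ}

/-- `Mm` is the multiplication operator on `H_{ρ,0}(ℝ;H)` induced by `M`. -/
def IsMulOp (ρ : ℝ) (M : ℝ → H →L[ℂ] H) (Mm : WL2 ρ H → WL2 ρ H) : Prop :=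
  ∀ u : WL2 ρ H, ⇑(Mm u) =ᵐ[wMeasure ρ] fun t => M t (u t)

/-- `P = ι₀ ι₀*` is the orthogonal projection onto `K`. -/
def IsKerProj (K : Submodule ℂ H) (P : H →L[ℂ] H) : Prop :=
  (∀ x ∈ K, P x = x) ∧ ∀ x ∈ Kᗮ, P x = 0

/-- `M0'` is the pointwise derivative of `M0` away from the null set `N`, and `0` on `N`. -/
def IsPtwDeriv (M0 : ℝ → H →L[ℂ] H) (N : Set ℝ) (M0' : ℝ → H →L[ℂ] H) : Prop :=
  (∀ t ∉ N, ∀ x, HasDerivAt (fun s => M0 s x) (M0' t x) t) ∧ ∀ t ∈ N, M0' t = 0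

/-!
If `A - c` is monotone and `B` is monotone, then `A + B - c` is monotone, i.e.
`c ‖u - v‖² ≤ Re ⟪u - v, f - g⟫` for `(u, f), (v, g) ∈ A + B`. Cauchy–Schwarz turns this
into `‖u - v‖ ≤ c⁻¹ ‖f - g‖`.
-/

section Relations

theorem relAdd_relSub {K : Type*} [AddCommGroup K] [Module ℝ K] (A B : Set (K × K)) (c : ℝ) :
    relAdd (relSub A c) B = relSub (relAdd A B) c := by
  ext ⟨x, y⟩
  simp only [relAdd, relSub, Set.mem_ofPred_eq]
  constructor
  · rintro ⟨a, b, ha, hb, rfl⟩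
    exact ⟨a + c • x, b, ha, hb, by abel⟩
  · rintro ⟨a, b, ha, hb, hab⟩
    refine ⟨a - c • x, b, by simpa using ha, hb, ?_⟩
    rw [sub_add_eq_add_sub, ← hab, add_sub_cancel_right]

variable {K : Type*} [NormedAddCommGroup K] [InnerProductSpace ℂ K]

theorem MonotoneRel.relAdd {A B : Set (K × K)} (hA : MonotoneRel A) (hB : MonotoneRel B) :
    MonotoneRel (relAdd A B) := by
  rintro ⟨x, _⟩ ⟨a, b, ha, hb, rfl⟩ ⟨x', _⟩ ⟨a', b', ha', hb', rfl⟩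
  have hsplit : a + b - (a' + b') = (a - a') + (b - b') := by abel
  simp only [hsplit, inner_add_right, Complex.add_re]
  exact add_nonneg (hA _ ha _ ha') (hB _ hb _ hb')

theorem re_inner_smul_self_right (x : K) (c : ℝ) : (⟪x, c • x⟫).re = c * ‖x‖ ^ 2 := by
  rw [← Complex.coe_smul, inner_smul_right, Complex.re_ofReal_mul]
  exact congrArg _ (inner_self_eq_norm_sq (𝕜 := ℂ) x)

theorem MonotoneRel.mul_norm_sq_le_re_inner_of_relSub {A : Set (K × K)} {c : ℝ}
    (h : MonotoneRel (relSub A c)) {x y x' y' : K} (hp : (x, y) ∈ A) (hq : (x', y') ∈ A) :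
    c * ‖x - x'‖ ^ 2 ≤ (⟪x - x', y - y'⟫).re := by
  have hmem : ∀ {a b : K}, (a, b) ∈ A → (a, b - c • a) ∈ relSub A c := fun hab => by
    simpa [relSub] using hab
  have hsplit : y - y' = (y - c • x - (y' - c • x')) + c • (x - x') := by
    rw [smul_sub]; abel
  have hmono := h _ (hmem hp) _ (hmem hq)
  rw [hsplit, inner_add_right, Complex.add_re, re_inner_smul_self_right]
  linarith

theorem norm_le_of_mul_norm_sq_le_re_inner {x y : K} {c : ℝ} (hc : 0 < c)
    (h : c * ‖x‖ ^ 2 ≤ (⟪x, y⟫).re) : ‖x‖ ≤ (1 / c) * ‖y‖ := by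
  have hcs : c * ‖x‖ ^ 2 ≤ ‖x‖ * ‖y‖ := h.trans (re_inner_le_norm (𝕜 := ℂ) x y)
  rw [div_mul_eq_mul_div, one_mul, le_div_iff₀ hc]
  rcases (norm_nonneg x).eq_or_lt with hx | hx
  · rw [← hx, zero_mul]
    exact norm_nonneg y
  · nlinarith

end Relations

theorem stmt7_general {H : Type*} [NormedAddCommGroup H] [InnerProductSpace ℂ H] [CompleteSpace H]
    (ctd : ℝ) (hctd0 : 0 < ctd)
    (ρ : ℝ)
    -- the multiplication operators M₀(m) and M₁(m)
    (M0m M1m : WL2 ρ H → WL2 ρ H)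
    -- ρ is such that ∂_{0,ρ}M₀(m) + M₁(m) - c̃ is maximal monotone
    (hmax : MaximalMonotoneRel (relSub (relAdd (dGraph ρ M0m) (graphOf M1m)) ctd))
    -- B is a monotone relation on H_{ρ,0}(ℝ;H)
    (B : Set (WL2 ρ H × WL2 ρ H)) (hB : MonotoneRel B) :
    ∀ u f v g : WL2 ρ H,
      (u, f) ∈ relAdd (relAdd (dGraph ρ M0m) (graphOf M1m)) B →
      (v, g) ∈ relAdd (relAdd (dGraph ρ M0m) (graphOf M1m)) B →
      ‖u - v‖ ≤ (1 / ctd) * ‖f - g‖ := by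
  intro u f v g hu hv
  have hmono : MonotoneRel
      (relSub (relAdd (relAdd (dGraph ρ M0m) (graphOf M1m)) B) ctd) := by
    rw [← relAdd_relSub]
    exact hmax.1.relAdd hB
  exact norm_le_of_mul_norm_sq_le_re_inner hctd0
    (hmono.mul_norm_sq_le_re_inner_of_relSub hu hv)

/-- Proposition 3.6: uniqueness/continuous dependence.  If
`∂_{0,ρ}M₀(m) + M₁(m) - c̃` is maximal monotone and `B` is a monotone relation on
`H_{ρ,0}(ℝ;H)`, then any two pairs in `∂_{0,ρ}M₀(m) + M₁(m) + B` satisfy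
`|u - v| ≤ (1/c̃)|f - g|`, i.e. the inverse relation is a Lipschitz-continuous
mapping. -/
theorem stmt7 {H : Type*} [NormedAddCommGroup H] [InnerProductSpace ℂ H] [CompleteSpace H]
    (M0 M1 : ℝ → H →L[ℂ] H)
    -- strong measurability and boundedness of M₀, M₁
    (hmeas0 : ∀ x : H, MeasureTheory.StronglyMeasurable fun t => M0 t x)
    (hmeas1 : ∀ x : H, MeasureTheory.StronglyMeasurable fun t => M1 t x)
    (B0 B1 : ℝ) (hB0 : ∀ t, ‖M0 t‖ ≤ B0) (hB1 : ∀ t, ‖M1 t‖ ≤ B1)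
    -- condition (a): M₀ Lipschitz with selfadjoint values
    (L0 : NNReal) (hLip : LipschitzWith L0 M0) (hsa : ∀ t, IsSelfAdjoint (M0 t))
    -- condition (b): pointwise differentiability off a null set N
    (N : Set ℝ) (hN : MeasureTheory.volume N = 0)
    (hdiff : ∀ x : H, ∀ t ∉ N, DifferentiableAt ℝ (fun s => M0 s x) t)
    -- condition (c): the kernel K = N(M₀) of M₀(t) is independent of t
    (K : Submodule ℂ H) (hker : ∀ t, LinearMap.ker (M0 t : H →ₗ[ℂ] H) = K)
    -- condition (d): ι₁* M₀(t) ι₁ - c₀ and ι₀* (Re M₁(t)) ι₀ - c₁ are monotone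
    (c0 c1 : ℝ) (hc0 : 0 < c0) (hc1 : 0 < c1)
    (hpos0 : ∀ t : ℝ, ∀ x ∈ Kᗮ, c0 * ‖x‖ ^ 2 ≤ (⟪x, M0 t x⟫).re)
    (hpos1 : ∀ t : ℝ, ∀ x ∈ K, c1 * ‖x‖ ^ 2 ≤ (⟪x, M1 t x⟫).re)
    (ctd : ℝ) (hctd0 : 0 < ctd) (hctd1 : ctd < c1)
    (ρ : ℝ) (hρ : 0 < ρ)
    -- the multiplication operators M₀(m) and M₁(m)
    (M0m M1m : WL2 ρ H → WL2 ρ H) (hM0m : IsMulOp ρ M0 M0m) (hM1m : IsMulOp ρ M1 M1m)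
    -- ρ is such that ∂_{0,ρ}M₀(m) + M₁(m) - c̃ is maximal monotone
    (hmax : MaximalMonotoneRel (relSub (relAdd (dGraph ρ M0m) (graphOf M1m)) ctd))
    -- B is a monotone relation on H_{ρ,0}(ℝ;H)
    (B : Set (WL2 ρ H × WL2 ρ H)) (hB : MonotoneRel B) :
    ∀ u f v g : WL2 ρ H,
      (u, f) ∈ relAdd (relAdd (dGraph ρ M0m) (graphOf M1m)) B →
      (v, g) ∈ relAdd (relAdd (dGraph ρ M0m) (graphOf M1m)) B →
      ‖u - v‖ ≤ (1 / ctd) * ‖f - g‖ :=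
  stmt7_general ctd hctd0 ρ M0m M1m hmax B hB
end
end

section
/- Let X be a Banach space and F, G : X → X Lipschitz-continuous mappings with |F|_Lip · |G|_Lip < 1. Then the relation (F^{−1} + G)^{−1} is a Lipschitz-continuous mapping with domain equal to X; its Lipschitz constant is at most |F|_Lip / (1 − |F|_Lip·|G|_Lip), and for x, y ∈ X one has (x,y) ∈ (F^{−1} + G)^{−1} if and only if y = F(x − G(y)). -/
/-!
`(x, y)` lies in `(F⁻¹ + G)⁻¹` exactly when `y` is a fixed point of `y ↦ F (x - G y)`, a
contraction with constant `|F|_Lip · |G|_Lip`; Banach's fixed point theorem gives existence and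
uniqueness. For two such points, `‖y₀ - y₁‖ ≤ |F|_Lip (‖x₀ - x₁‖ + |G|_Lip ‖y₀ - y₁‖)`, which
rearranges to the Lipschitz bound.
-/

noncomputable section

/-- The relation `(F⁻¹ + G)⁻¹` for mappings `F, G`. -/
def invSumInv {K : Type*} [AddCommGroup K] (F G : K → K) : Set (K × K) :=
  relInv (relAdd (relInv (graphOf F)) (graphOf G))

theorem mem_invSumInv_iff {K : Type*} [AddCommGroup K] (F G : K → K) (x y : K) :
    (x, y) ∈ invSumInv F G ↔ y = F (x - G y) := by
  simp only [invSumInv, relInv, relAdd, graphOf, Set.mem_ofPred_eq]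
  constructor
  · rintro ⟨a, b, rfl, rfl, rfl⟩
    simp
  · intro h
    exact ⟨x - G y, G y, h, rfl, by abel⟩

section Lipschitz

variable {X : Type*} [SeminormedAddCommGroup X] {F G : X → X} {LF LG : NNReal}

theorem LipschitzWith.comp_const_sub (hF : LipschitzWith LF F) (hG : LipschitzWith LG G)
    (x : X) : LipschitzWith (LF * LG) fun y => F (x - G y) :=
  hF.comp ((LipschitzWith.const x).sub hG) |>.weaken (by simp)

theorem norm_sub_le_of_eq_comp_sub (hF : LipschitzWith LF F) (hG : LipschitzWith LG G)
    (hsmall : (LF : ℝ) * LG < 1) {x₀ y₀ x₁ y₁ : X}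
    (h₀ : y₀ = F (x₀ - G y₀)) (h₁ : y₁ = F (x₁ - G y₁)) :
    ‖y₀ - y₁‖ ≤ (LF : ℝ) / (1 - LF * LG) * ‖x₀ - x₁‖ := by
  have hG_le : ‖G y₀ - G y₁‖ ≤ LG * ‖y₀ - y₁‖ := hG.norm_sub_le y₀ y₁
  have hkey : ‖y₀ - y₁‖ ≤ LF * (‖x₀ - x₁‖ + LG * ‖y₀ - y₁‖) :=
    calc ‖y₀ - y₁‖ = ‖F (x₀ - G y₀) - F (x₁ - G y₁)‖ := by rw [← h₀, ← h₁]
      _ ≤ LF * ‖(x₀ - G y₀) - (x₁ - G y₁)‖ := hF.norm_sub_le _ _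
      _ = LF * ‖(x₀ - x₁) - (G y₀ - G y₁)‖ := by congr 2; abel
      _ ≤ LF * (‖x₀ - x₁‖ + LG * ‖y₀ - y₁‖) := by
        gcongr
        exact (norm_sub_le _ _).trans (by gcongr)
  rw [div_mul_eq_mul_div, le_div_iff₀ (by linarith)]
  linarith

end Lipschitz

theorem stmt13_general {X : Type*} [NormedAddCommGroup X] [CompleteSpace X]
    (F G : X → X) (LF LG : NNReal)
    (hF : LipschitzWith LF F) (hG : LipschitzWith LG G)
    (hsmall : (LF : ℝ) * (LG : ℝ) < 1) :
    (∀ x y : X, (x, y) ∈ invSumInv F G ↔ y = F (x - G y)) ∧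
    (∀ x : X, ∃! y : X, (x, y) ∈ invSumInv F G) ∧
    ∀ x₀ y₀ x₁ y₁ : X, (x₀, y₀) ∈ invSumInv F G → (x₁, y₁) ∈ invSumInv F G →
      ‖y₀ - y₁‖ ≤ ((LF : ℝ) / (1 - (LF : ℝ) * (LG : ℝ))) * ‖x₀ - x₁‖ := by
  refine ⟨mem_invSumInv_iff F G, fun x => ?_, fun x₀ y₀ x₁ y₁ h₀ h₁ => ?_⟩
  · have hc : ContractingWith (LF * LG) fun y => F (x - G y) :=
      ⟨by exact_mod_cast hsmall, hF.comp_const_sub hG x⟩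
    simp only [mem_invSumInv_iff]
    exact ⟨hc.fixedPoint, hc.fixedPoint_isFixedPt.symm,
      fun y hy => hc.fixedPoint_unique hy.symm⟩
  · rw [mem_invSumInv_iff] at h₀ h₁
    exact norm_sub_le_of_eq_comp_sub hF hG hsmall h₀ h₁

/-- Proposition 3.13, contraction part: if `F, G : X → X` are
Lipschitz with `|F|_Lip · |G|_Lip < 1` then `(F⁻¹ + G)⁻¹` is an everywhere defined
Lipschitz-continuous mapping with constant at most `|F|_Lip/(1 - |F|_Lip·|G|_Lip)`,
characterized by the fixed point equation `y = F (x - G y)`. -/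
theorem stmt13 {X : Type*} [NormedAddCommGroup X] [NormedSpace ℝ X] [CompleteSpace X]
    (F G : X → X) (LF LG : NNReal)
    (hF : LipschitzWith LF F) (hG : LipschitzWith LG G)
    -- LF and LG are the smallest Lipschitz constants
    (hFmin : ∀ L : NNReal, LipschitzWith L F → LF ≤ L)
    (hGmin : ∀ L : NNReal, LipschitzWith L G → LG ≤ L)
    (hsmall : (LF : ℝ) * (LG : ℝ) < 1) :
    (∀ x y : X, (x, y) ∈ invSumInv F G ↔ y = F (x - G y)) ∧
    (∀ x : X, ∃! y : X, (x, y) ∈ invSumInv F G) ∧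
    ∀ x₀ y₀ x₁ y₁ : X, (x₀, y₀) ∈ invSumInv F G → (x₁, y₁) ∈ invSumInv F G →
      ‖y₀ - y₁‖ ≤ ((LF : ℝ) / (1 - (LF : ℝ) * (LG : ℝ))) * ‖x₀ - x₁‖ :=
  stmt13_general F G LF LG hF hG hsmall
end
end

section
/- Let H be a complex Hilbert space, ν ≥ ρ > 0, a ∈ ℝ and u ∈ H_{ρ,0}(ℝ;H) with support spt u ⊆ [a,∞). Then u ∈ H_{ν,0}(ℝ;H). Moreover, if u ∈ H_{ρ,1}(ℝ;H) then u ∈ H_{ν,1}(ℝ;H) and ∂_{0,ρ}u = ∂_{0,ν}u. -/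
/-! On `[b, ∞)` the weight `e^{-2νt}` is at most `e^{2(ρ-ν)b} e^{-2ρt}`, so for functions vanishing
before `b` the `H_{ν,0}` norm is dominated by the `H_{ρ,0}` norm; this gives `u ∈ H_{ν,0}`.
For the derivative, `∂_{0,ρ}` is causal: pairing `(u, u')` with a test function supported in
`(-∞, a)` and integrating by parts shows that `u'` vanishes on `(-∞, a)` too. If test functions
`φₙ` approximate `(u, u')` in the graph of `∂_{0,ρ}`, then so do `χ φₙ` for a smooth cutoff `χ`
equal to `0` before `a - 2` and to `1` after `a - 1`; these are supported in `[a - 2, ∞)`, so by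
the norm comparison they converge in `H_{ν,0}` as well. -/

noncomputable section

open MeasureTheory Filter Topology Set

local notation "⟪" x ", " y "⟫" => @inner ℂ _ _ x y

variable {H : Type*} [NormedAddCommGroup H] [InnerProductSpace ℂ H] [CompleteSpace H]

open scoped ENNReal ContDiff

section WeightedMeasure

variable {E : Type*} [NormedAddCommGroup E] [NormedSpace ℝ E]

lemma continuous_exp_weight (ρ : ℝ) : Continuous fun t : ℝ => Real.exp (-2 * ρ * t) := by
  fun_prop

lemma measurable_wDensity (ρ : ℝ) :
    Measurable fun t : ℝ => ENNReal.ofReal (Real.exp (-2 * ρ * t)) :=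
  (continuous_exp_weight ρ).measurable.ennreal_ofReal

lemma wMeasure_absolutelyContinuous (ρ : ℝ) : wMeasure ρ ≪ volume :=
  withDensity_absolutelyContinuous _ _

lemma volume_absolutelyContinuous_wMeasure (ρ : ℝ) : volume ≪ wMeasure ρ :=
  withDensity_absolutelyContinuous' (measurable_wDensity ρ).aemeasurable
    (ae_of_all _ fun t => by simp [Real.exp_pos])

instance (ρ : ℝ) : IsLocallyFiniteMeasure (wMeasure ρ) :=
  IsLocallyFiniteMeasure.withDensity_ofReal (continuous_exp_weight ρ)

lemma integral_wMeasure (ρ : ℝ) (g : ℝ → E) :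
    ∫ t, g t ∂wMeasure ρ = ∫ t, Real.exp (-2 * ρ * t) • g t := by
  rw [wMeasure, integral_withDensity_eq_integral_toReal_smul (measurable_wDensity ρ)
    (ae_of_all _ fun _ => ENNReal.ofReal_lt_top)]
  simp only [ENNReal.toReal_ofReal (Real.exp_pos _).le]

lemma eLpNorm_wMeasure (ρ : ℝ) (f : ℝ → E) :
    eLpNorm f 2 (wMeasure ρ) = eLpNorm (fun t => Real.exp (-ρ * t) • f t) 2 volume := by
  simp only [eLpNorm_eq_lintegral_rpow_enorm_toReal two_ne_zero ENNReal.ofNat_ne_top]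
  rw [wMeasure, lintegral_withDensity_eq_lintegral_mul_non_measurable _ (measurable_wDensity ρ)
    (ae_of_all _ fun _ => ENNReal.ofReal_lt_top)]
  congr 1
  refine lintegral_congr fun t => ?_
  rw [enorm_smul, Real.enorm_eq_ofReal (Real.exp_pos _).le, Pi.mul_apply,
    ENNReal.mul_rpow_of_nonneg _ _ (by norm_num),
    ENNReal.ofReal_rpow_of_nonneg (Real.exp_pos _).le (by norm_num)]
  congr 2
  rw [← Real.exp_mul, ENNReal.toReal_ofNat]
  ring_nf

lemma eLpNorm_wMeasure_le_of_le {ρ ν : ℝ} (hρν : ρ ≤ ν) {b : ℝ} {f : ℝ → E}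
    (hf : ∀ᵐ t, t < b → f t = 0) :
    eLpNorm f 2 (wMeasure ν) ≤
      ENNReal.ofReal (Real.exp ((ρ - ν) * b)) * eLpNorm f 2 (wMeasure ρ) := by
  rw [eLpNorm_wMeasure, eLpNorm_wMeasure]
  refine eLpNorm_le_mul_eLpNorm_of_ae_le_mul ?_ 2
  filter_upwards [hf] with t ht
  rcases lt_or_ge t b with htb | hbt
  · simp [ht htb]
  rw [norm_smul, norm_smul, ← mul_assoc, Real.norm_of_nonneg (Real.exp_pos _).le,
    Real.norm_of_nonneg (Real.exp_pos _).le, ← Real.exp_add]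
  gcongr
  nlinarith

lemma memLp_wMeasure_of_le {ρ ν : ℝ} (hρν : ρ ≤ ν) {b : ℝ} {f : ℝ → E}
    (hmem : MemLp f 2 (wMeasure ρ)) (hf : ∀ᵐ t, t < b → f t = 0) : MemLp f 2 (wMeasure ν) :=
  ⟨hmem.1.mono_ac
      ((wMeasure_absolutelyContinuous ν).trans (volume_absolutelyContinuous_wMeasure ρ)),
    (eLpNorm_wMeasure_le_of_le hρν hf).trans_lt (ENNReal.mul_lt_top ENNReal.ofReal_lt_top hmem.2)⟩

lemma tendsto_eLpNorm_wMeasure_of_le {ρ ν b : ℝ} (hρν : ρ ≤ ν) {f : ℕ → ℝ → E} {g : ℝ → E}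
    (hb : ∀ n, ∀ᵐ t, t < b → f n t = g t)
    (hlim : Tendsto (fun n => eLpNorm (f n - g) 2 (wMeasure ρ)) atTop (𝓝 0)) :
    Tendsto (fun n => eLpNorm (f n - g) 2 (wMeasure ν)) atTop (𝓝 0) := by
  have hc := ENNReal.Tendsto.const_mul (a := ENNReal.ofReal (Real.exp ((ρ - ν) * b))) hlim
    (Or.inr ENNReal.ofReal_ne_top)
  rw [mul_zero] at hc
  exact tendsto_of_tendsto_of_tendsto_of_le_of_le tendsto_const_nhds hc (fun _ => zero_le)
    fun n => eLpNorm_wMeasure_le_of_le hρν ((hb n).mono fun t ht htb => sub_eq_zero.2 (ht htb))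

end WeightedMeasure

lemma tendsto_eLpNorm_smul_of_norm_le {α F ι : Type*} [MeasurableSpace α] {μ : Measure α}
    [NormedAddCommGroup F] [NormedSpace ℝ F] {p : ℝ≥0∞} {l : Filter ι} {f : ι → α → F}
    {c : α → ℝ} {C : ℝ} (hc : ∀ x, ‖c x‖ ≤ C) (hf : Tendsto (fun i => eLpNorm (f i) p μ) l (𝓝 0)) :
    Tendsto (fun i => eLpNorm (c • f i) p μ) l (𝓝 0) := by
  have hCf := ENNReal.Tendsto.const_mul (a := ENNReal.ofReal C) hf (Or.inr ENNReal.ofReal_ne_top)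
  rw [mul_zero] at hCf
  refine tendsto_of_tendsto_of_tendsto_of_le_of_le tendsto_const_nhds hCf (fun _ => zero_le)
    fun i => eLpNorm_le_mul_eLpNorm_of_ae_le_mul (ae_of_all _ fun x => ?_) p
  rw [Pi.smul_apply', norm_smul]
  exact mul_le_mul_of_nonneg_right (hc x) (norm_nonneg _)

lemma tendsto_eLpNorm_add_of_tendsto {α F ι : Type*} [MeasurableSpace α] {μ : Measure α}
    [NormedAddCommGroup F] {p : ℝ≥0∞} (hp : 1 ≤ p) {l : Filter ι} {f g : ι → α → F}
    (hfm : ∀ i, AEStronglyMeasurable (f i) μ) (hgm : ∀ i, AEStronglyMeasurable (g i) μ)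
    (hf : Tendsto (fun i => eLpNorm (f i) p μ) l (𝓝 0))
    (hg : Tendsto (fun i => eLpNorm (g i) p μ) l (𝓝 0)) :
    Tendsto (fun i => eLpNorm (f i + g i) p μ) l (𝓝 0) :=
  tendsto_of_tendsto_of_tendsto_of_le_of_le tendsto_const_nhds (by simpa using hf.add hg)
    (fun _ => zero_le) fun i => eLpNorm_add_le (hfm i) (hgm i) hp

lemma exists_smooth_cutoff (b : ℝ) :
    ∃ χ : ℝ → ℝ, ContDiff ℝ ∞ χ ∧ (∀ t, ‖χ t‖ ≤ 1) ∧ (∃ M, ∀ t, ‖deriv χ t‖ ≤ M) ∧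
      (∀ t < b, χ t = 0 ∧ deriv χ t = 0) ∧ ∀ t, b + 1 < t → χ t = 1 ∧ deriv χ t = 0 := by
  set χ : ℝ → ℝ := fun t => Real.smoothTransition (t - b)
  have hχ : ContDiff ℝ ∞ χ := Real.smoothTransition.contDiff.comp (contDiff_id.sub contDiff_const)
  have hleft : ∀ t < b, χ t = 0 ∧ deriv χ t = 0 := fun t ht =>
    have hχ0 : χ =ᶠ[𝓝 t] fun _ => 0 := (eventually_lt_nhds ht).mono fun s hs =>
      Real.smoothTransition.zero_of_nonpos (by linarith)
    ⟨hχ0.eq_of_nhds, by rw [hχ0.deriv_eq, deriv_const]⟩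
  have hright : ∀ t, b + 1 < t → χ t = 1 ∧ deriv χ t = 0 := fun t ht =>
    have hχ1 : χ =ᶠ[𝓝 t] fun _ => 1 := (eventually_gt_nhds ht).mono fun s hs =>
      Real.smoothTransition.one_of_one_le (by linarith)
    ⟨hχ1.eq_of_nhds, by rw [hχ1.deriv_eq, deriv_const]⟩
  have hχ'c : HasCompactSupport (deriv χ) :=
    HasCompactSupport.intro (K := Icc b (b + 1)) isCompact_Icc fun t ht => by
      rcases not_and_or.1 ht with ht | ht
      · exact (hleft t (not_le.1 ht)).2
      · exact (hright t (not_le.1 ht)).2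
  refine ⟨χ, hχ, fun t => ?_,
    (hχ.continuous_deriv (mod_cast le_top)).bounded_above_of_compact_support hχ'c, hleft, hright⟩
  rw [Real.norm_of_nonneg (Real.smoothTransition.nonneg _)]
  exact Real.smoothTransition.le_one _

section Derivative

variable {E : Type*} [NormedAddCommGroup E] [InnerProductSpace ℂ E]

lemma integral_inner_deriv_wMeasure (ρ : ℝ) {φ ψ : ℝ → E} (hφ : ContDiff ℝ 1 φ)
    (hφc : HasCompactSupport φ) (hψ : ContDiff ℝ 1 ψ) :
    ∫ t, ⟪ψ t, deriv φ t⟫ ∂wMeasure ρ = ∫ t, ⟪(2 * ρ) • ψ t - deriv ψ t, φ t⟫ ∂wMeasure ρ := by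
  set w : ℝ → ℝ := fun t => Real.exp (-2 * ρ * t) with hw_def
  have hw : Continuous w := continuous_exp_weight ρ
  have hw' : ∀ t, HasDerivAt w (-2 * ρ * w t) t := fun t => by
    simpa [hw_def, mul_comm] using ((hasDerivAt_id t).const_mul (-2 * ρ)).exp
  have hF : ∀ t, HasDerivAt (fun t => w t • ⟪ψ t, φ t⟫)
      (w t • ⟪ψ t, deriv φ t⟫ - w t • ⟪(2 * ρ) • ψ t - deriv ψ t, φ t⟫) t := by
    intro t
    refine ((hw' t).smul ((hψ.differentiable one_ne_zero t).hasDerivAt.inner ℂ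
      (hφ.differentiable one_ne_zero t).hasDerivAt)).congr_deriv ?_
    rw [inner_sub_left, inner_smul_left_eq_smul]
    module
  have hG₁ : Integrable fun t => w t • ⟪ψ t, deriv φ t⟫ :=
    (hw.smul (hψ.continuous.inner (hφ.continuous_deriv le_rfl))).integrable_of_hasCompactSupport
      (hφc.deriv.mono fun t ht h0 => ht (by simp [h0]))
  have hG₂ : Integrable fun t => w t • ⟪(2 * ρ) • ψ t - deriv ψ t, φ t⟫ :=
    (hw.smul (((hψ.continuous.const_smul _).sub (hψ.continuous_deriv le_rfl)).inner
      hφ.continuous)).integrable_of_hasCompactSupport (hφc.mono fun t ht h0 => ht (by simp [h0]))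
  have hFi : Integrable fun t => w t • ⟪ψ t, φ t⟫ :=
    (hw.smul (hψ.continuous.inner hφ.continuous)).integrable_of_hasCompactSupport
      (hφc.mono fun t ht h0 => ht (by simp [h0]))
  rw [integral_wMeasure, integral_wMeasure, ← sub_eq_zero, ← integral_sub hG₁ hG₂]
  exact integral_eq_zero_of_hasDerivAt_of_integrable hF (hG₁.sub hG₂) hFi

lemma inner_toLp_left {α : Type*} [MeasurableSpace α] {μ : Measure α} {ψ : α → E}
    (hψ : MemLp ψ 2 μ) (g : Lp E 2 μ) : ⟪hψ.toLp ψ, g⟫ = ∫ t, ⟪ψ t, g t⟫ ∂μ := by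
  rw [L2.inner_def]
  exact integral_congr_ae (by filter_upwards [hψ.coeFn_toLp] with t ht; rw [ht])

lemma integral_inner_eq_of_mem_derivRel {ρ : ℝ} {u u' : WL2 ρ E} (hd : (u, u') ∈ derivRel ρ)
    {ψ : ℝ → E} (hψ : ContDiff ℝ 1 ψ) (hψc : HasCompactSupport ψ) :
    ∫ t, ⟪ψ t, u' t⟫ ∂wMeasure ρ = ∫ t, ⟪(2 * ρ) • ψ t - deriv ψ t, u t⟫ ∂wMeasure ρ := by
  have hψ₂ : MemLp ψ 2 (wMeasure ρ) := hψ.continuous.memLp_of_hasCompactSupport hψc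
  have hθ₂ : MemLp (fun t => (2 * ρ) • ψ t - deriv ψ t) 2 (wMeasure ρ) :=
    ((hψ.continuous.const_smul _).sub (hψ.continuous_deriv le_rfl)).memLp_of_hasCompactSupport
      ((hψc.smul_left (f := fun _ => 2 * ρ)).sub hψc.deriv)
  have hclosed : derivRel ρ ⊆
      {p : WL2 ρ E × WL2 ρ E | ⟪hψ₂.toLp ψ, p.2⟫ = ⟪hθ₂.toLp _, p.1⟫} := by
    refine closure_minimal ?_ (isClosed_eq (by fun_prop) (by fun_prop))
    rintro p ⟨φ, hφ, hφc, h₁, h₂⟩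
    simp only [mem_ofPred_eq, inner_toLp_left]
    calc ∫ t, ⟪ψ t, p.2 t⟫ ∂wMeasure ρ = ∫ t, ⟪ψ t, deriv φ t⟫ ∂wMeasure ρ :=
          integral_congr_ae (h₂.mono fun t ht => congrArg (⟪ψ t, ·⟫) ht)
      _ = ∫ t, ⟪(2 * ρ) • ψ t - deriv ψ t, φ t⟫ ∂wMeasure ρ :=
          integral_inner_deriv_wMeasure ρ (hφ.of_le (mod_cast le_top)) hφc hψ
      _ = _ := integral_congr_ae (h₁.mono fun t ht => congrArg (⟪_, ·⟫) ht.symm)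
  simpa only [mem_ofPred_eq, inner_toLp_left] using hclosed hd

lemma ae_eq_zero_of_mem_derivRel [CompleteSpace E] {ρ a : ℝ} {u u' : WL2 ρ E}
    (hd : (u, u') ∈ derivRel ρ) (hu : ∀ᵐ t, t < a → u t = 0) : ∀ᵐ t, t < a → u' t = 0 := by
  have hu' : LocallyIntegrable u' (wMeasure ρ) := (Lp.memLp u').locallyIntegrable one_le_two
  refine (volume_absolutelyContinuous_wMeasure ρ).ae_le
    (isOpen_Iio.ae_eq_zero_of_integral_contDiff_smul_eq_zero (hu'.locallyIntegrableOn _)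
      fun g hg hgc hga => ext_inner_left ℂ fun c => ?_)
  set ψ : ℝ → E := fun t => g t • c
  have hψ : ContDiff ℝ 1 ψ := (hg.smul contDiff_const).of_le (mod_cast le_top)
  have hψa : tsupport ψ ⊆ Iio a := (tsupport_smul_subset_left _ _).trans hga
  rw [inner_zero_right, ← integral_inner
    (hu'.integrable_smul_left_of_hasCompactSupport hg.continuous hgc)]
  calc ∫ t, ⟪c, g t • u' t⟫ ∂wMeasure ρ = ∫ t, ⟪ψ t, u' t⟫ ∂wMeasure ρ := by
        congr 1 with t
        rw [inner_smul_left_eq_smul, inner_smul_right_eq_smul]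
    _ = ∫ t, ⟪(2 * ρ) • ψ t - deriv ψ t, u t⟫ ∂wMeasure ρ :=
        integral_inner_eq_of_mem_derivRel hd hψ (hgc.smul_right)
    _ = 0 := by
        refine integral_eq_zero_of_ae ?_
        filter_upwards [(wMeasure_absolutelyContinuous ρ).ae_le hu] with t ht
        by_cases hta : t < a
        · simp [ht hta]
        have hψt : t ∉ tsupport ψ := fun h => hta (hψa h)
        simp [image_eq_zero_of_notMem_tsupport hψt,
          image_eq_zero_of_notMem_tsupport fun h => hψt (tsupport_deriv_subset h)]

lemma mem_derivRel_iff {ρ : ℝ} {u u' : WL2 ρ E} :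
    (u, u') ∈ derivRel ρ ↔ ∃ φ : ℕ → ℝ → E, (∀ n, ContDiff ℝ ∞ (φ n) ∧ HasCompactSupport (φ n)) ∧
      Tendsto (fun n => eLpNorm (φ n - ⇑u) 2 (wMeasure ρ)) atTop (𝓝 0) ∧
      Tendsto (fun n => eLpNorm (deriv (φ n) - ⇑u') 2 (wMeasure ρ)) atTop (𝓝 0) := by
  constructor
  · intro hd
    obtain ⟨p, hp, hlim⟩ := mem_closure_iff_seq_limit.1 hd
    choose φ hφ hφc hφ₁ hφ₂ using hp
    refine ⟨φ, fun n => ⟨hφ n, hφc n⟩, ?_, ?_⟩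
    · exact ((Lp.tendsto_Lp_iff_tendsto_eLpNorm' _ _).1
        ((continuous_fst.tendsto _).comp hlim)).congr
          fun n => eLpNorm_congr_ae ((hφ₁ n).sub EventuallyEq.rfl)
    · exact ((Lp.tendsto_Lp_iff_tendsto_eLpNorm' _ _).1
        ((continuous_snd.tendsto _).comp hlim)).congr
          fun n => eLpNorm_congr_ae ((hφ₂ n).sub EventuallyEq.rfl)
  · rintro ⟨φ, hφ, hφu, hφu'⟩
    have h₁ : ∀ n, MemLp (φ n) 2 (wMeasure ρ) := fun n =>
      (hφ n).1.continuous.memLp_of_hasCompactSupport (hφ n).2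
    have h₂ : ∀ n, MemLp (deriv (φ n)) 2 (wMeasure ρ) := fun n =>
      ((hφ n).1.continuous_deriv (by simp)).memLp_of_hasCompactSupport (hφ n).2.deriv
    refine mem_closure_iff_seq_limit.2 ⟨fun n => ((h₁ n).toLp _, (h₂ n).toLp _),
      fun n => ⟨φ n, (hφ n).1, (hφ n).2, (h₁ n).coeFn_toLp, (h₂ n).coeFn_toLp⟩, .prodMk_nhds ?_ ?_⟩
    · exact (Lp.tendsto_Lp_iff_tendsto_eLpNorm' _ _).2 (hφu.congr fun n =>
        eLpNorm_congr_ae ((h₁ n).coeFn_toLp.sub EventuallyEq.rfl).symm)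
    · exact (Lp.tendsto_Lp_iff_tendsto_eLpNorm' _ _).2 (hφu'.congr fun n =>
        eLpNorm_congr_ae ((h₂ n).coeFn_toLp.sub EventuallyEq.rfl).symm)

lemma mem_derivRel_of_le {ρ ν a : ℝ} (hρν : ρ ≤ ν) {u u' : WL2 ρ E} (hd : (u, u') ∈ derivRel ρ)
    (hu : ∀ᵐ t, t < a → u t = 0) (hu' : ∀ᵐ t, t < a → u' t = 0) {w w' : WL2 ν E}
    (hw : ⇑w =ᵐ[volume] ⇑u) (hw' : ⇑w' =ᵐ[volume] ⇑u') : (w, w') ∈ derivRel ν := by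
  obtain ⟨χ, hχ, hχ_le, ⟨M, hM⟩, hχ_left, hχ_right⟩ := exists_smooth_cutoff (a - 2)
  have hχu : ∀ᵐ t ∂wMeasure ρ, χ t • u t = u t ∧ deriv χ t • u t = 0 ∧ χ t • u' t = u' t := by
    refine (wMeasure_absolutelyContinuous ρ).ae_le ?_
    filter_upwards [hu, hu'] with t ht ht'
    rcases lt_or_ge t a with hta | hta
    · simp [ht hta, ht' hta]
    · obtain ⟨h₁, h₂⟩ := hχ_right t (by linarith)
      simp [h₁, h₂]
  obtain ⟨φ, hφ, hφu, hφu'⟩ := mem_derivRel_iff.1 hd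
  -- supported in `[a - 2, ∞)`, where the `ν`-norm is dominated by the `ρ`-norm
  set ψ : ℕ → ℝ → E := fun n t => χ t • φ n t
  have hψ' : ∀ n t, deriv (ψ n) t = χ t • deriv (φ n) t + deriv χ t • φ n t := fun n t =>
    ((hχ.differentiable (by simp) t).hasDerivAt.smul
      ((hφ n).1.differentiable (by simp) t).hasDerivAt).deriv
  have hwν := (wMeasure_absolutelyContinuous ν).ae_eq hw
  have hw'ν := (wMeasure_absolutelyContinuous ν).ae_eq hw'
  refine mem_derivRel_iff.2 ⟨ψ, fun n => ⟨hχ.smul (hφ n).1, (hφ n).2.smul_left⟩, ?_, ?_⟩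
  · refine (tendsto_eLpNorm_wMeasure_of_le hρν (b := a - 2) (fun n => ?_) ?_).congr
      fun n => eLpNorm_congr_ae (EventuallyEq.rfl.sub hwν.symm)
    · filter_upwards [hu] with t ht htb
      simp [ψ, (hχ_left t htb).1, ht (by linarith)]
    · refine (tendsto_eLpNorm_smul_of_norm_le hχ_le hφu).congr fun n => eLpNorm_congr_ae ?_
      filter_upwards [hχu] with t ht
      simp [ψ, smul_sub, ht.1]
  · refine (tendsto_eLpNorm_wMeasure_of_le hρν (b := a - 2) (fun n => ?_) ?_).congr
      fun n => eLpNorm_congr_ae (EventuallyEq.rfl.sub hw'ν.symm)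
    · filter_upwards [hu'] with t ht htb
      simp [hψ', hχ_left t htb, ht (by linarith)]
    · refine (tendsto_eLpNorm_add_of_tendsto one_le_two (fun n => ?_) (fun n => ?_)
        (tendsto_eLpNorm_smul_of_norm_le hM hφu) (tendsto_eLpNorm_smul_of_norm_le hχ_le hφu')).congr
        fun n => eLpNorm_congr_ae ?_
      · exact (hχ.continuous_deriv (by simp)).aestronglyMeasurable.smul
          ((hφ n).1.continuous.aestronglyMeasurable.sub (Lp.aestronglyMeasurable u))
      · exact hχ.continuous.aestronglyMeasurable.smul
          (((hφ n).1.continuous_deriv (by simp)).aestronglyMeasurable.sub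
            (Lp.aestronglyMeasurable u'))
      · filter_upwards [hχu] with t ht
        simp only [Pi.add_apply, Pi.smul_apply', Pi.sub_apply, smul_sub, hψ', ht.2.1, ht.2.2]
        abel

end Derivative

theorem stmt15_general {H : Type*} [NormedAddCommGroup H] [InnerProductSpace ℂ H] [CompleteSpace H]
    (ρ ν : ℝ) (hν : ρ ≤ ν) (a : ℝ)
    (u : WL2 ρ H) (hspt : ∀ᵐ t ∂(MeasureTheory.volume), t < a → u t = 0) :
    (∃ w : WL2 ν H, ⇑w =ᵐ[MeasureTheory.volume] ⇑u) ∧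
    ∀ u' : WL2 ρ H, (u, u') ∈ derivRel ρ →
      ∃ w w' : WL2 ν H, ⇑w =ᵐ[MeasureTheory.volume] ⇑u ∧
        ⇑w' =ᵐ[MeasureTheory.volume] ⇑u' ∧ (w, w') ∈ derivRel ν := by
  have hu := memLp_wMeasure_of_le hν (Lp.memLp u) hspt
  have hw := (volume_absolutelyContinuous_wMeasure ν).ae_eq hu.coeFn_toLp
  refine ⟨⟨_, hw⟩, fun u' hd => ?_⟩
  have hspt' := ae_eq_zero_of_mem_derivRel hd hspt
  have hu' := memLp_wMeasure_of_le hν (Lp.memLp u') hspt'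
  have hw' := (volume_absolutelyContinuous_wMeasure ν).ae_eq hu'.coeFn_toLp
  exact ⟨_, _, hw, hw', mem_derivRel_of_le hν hd hspt hspt' hw hw'⟩

/-- Lemma 3.14: if `ν ≥ ρ > 0` and `u ∈ H_{ρ,0}(ℝ;H)` is supported on
`[a,∞)`, then `u ∈ H_{ν,0}(ℝ;H)`; moreover, if `u ∈ H_{ρ,1}(ℝ;H)` then
`u ∈ H_{ν,1}(ℝ;H)` and `∂_{0,ρ} u = ∂_{0,ν} u`. -/
theorem stmt15 {H : Type*} [NormedAddCommGroup H] [InnerProductSpace ℂ H] [CompleteSpace H]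
    (ρ ν : ℝ) (hρ : 0 < ρ) (hν : ρ ≤ ν) (a : ℝ)
    (u : WL2 ρ H) (hspt : ∀ᵐ t ∂(MeasureTheory.volume), t < a → u t = 0) :
    (∃ w : WL2 ν H, ⇑w =ᵐ[MeasureTheory.volume] ⇑u) ∧
    ∀ u' : WL2 ρ H, (u, u') ∈ derivRel ρ →
      ∃ w w' : WL2 ν H, ⇑w =ᵐ[MeasureTheory.volume] ⇑u ∧
        ⇑w' =ᵐ[MeasureTheory.volume] ⇑u' ∧ (w, w') ∈ derivRel ν :=
  stmt15_general ρ ν hν a u hspt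
end
end
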